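/- Let T > 0, q ≥ 1, β_1,…,β_q > 0, and define the multivariate fractional kernels k_r(t,s) := (t−s)^{β_r − 1}/Γ(β_r) for 0 ≤ s < t ≤ T. For a word p_1⋯p_n ∈ {1,…,q}^n write B_j := ∑_{l=1}^{j} β_{p_l} (with B_0 := 0). Then for all 0 ≤ s < t ≤ τ ≤ T: (a) for every n ≥ 1, 𝒦^{p_1⋯p_n,τ}_{s,t} = ((τ−s)^{B_n}/Γ(B_n + 1)) · I_{(t−s)/(τ−s)}(B_{n−1} + 1, β_{p_n}); (b) for every n ≥ 2, 𝒦̇^{p_1⋯p_n,τ}_{s,t} = ((τ−s)^{B_n − 1}/Γ(B_n)) · I_{(t−s)/(τ−s)}(B_{n−1}, β_{p_n}). -/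

import Mathlib

open MeasureTheory Matrix

noncomputable section

/-- The simplex `Δ^n_{s,t}` of nondecreasing `n`-tuples with values in `[s,t]`. -/
def volSimplex (n : ℕ) (s t : ℝ) : Set (Fin n → ℝ) :=
  {r | (∀ i, r i ∈ Set.Icc s t) ∧ ∀ i j : Fin n, i ≤ j → r i ≤ r j}

/-- `r_{l+1}`, with the convention that `r_{n+1} = τ`. -/
def nxt {n : ℕ} (r : Fin n → ℝ) (τ : ℝ) (l : Fin n) : ℝ :=
  if h : (l : ℕ) + 1 < n then r ⟨(l : ℕ) + 1, h⟩ else τ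

/-- The chain `s = r̃_0, r̃_1 = r_1, …, r̃_n = r_n, r̃_{n+1} = τ`. -/
def chain {n : ℕ} (s τ : ℝ) (r : Fin n → ℝ) : Fin (n + 2) → ℝ := fun i =>
  if h0 : (i : ℕ) = 0 then s
  else if h : (i : ℕ) ≤ n then r ⟨(i : ℕ) - 1, by omega⟩ else τ

/-- `𝒦^{p₁⋯pₙ,τ}_{s,t}` for the scalar kernels `k`. -/
def scrK {q : ℕ} (k : Fin q → ℝ → ℝ → ℝ) {n : ℕ} (p : Fin n → Fin q)
    (s t τ : ℝ) : ℝ :=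
  ∫ r in volSimplex n s t, ∏ l, k (p l) (nxt r τ l) (r l)

/-- `𝒦̇^{p₁⋯p_{n+1},τ}_{s,t}` for a word of length `n + 1`. -/
def scrKdot {q : ℕ} (k : Fin q → ℝ → ℝ → ℝ) {n : ℕ} (p : Fin (n + 1) → Fin q)
    (s t τ : ℝ) : ℝ :=
  ∫ r in volSimplex n s t,
    ∏ l : Fin (n + 1), k (p l) (chain s τ r l.succ) (chain s τ r l.castSucc)

/-- The regularized incomplete Beta function `I_x(a,b)`. -/
def regIncBeta (x a b : ℝ) : ℝ :=
  (Real.Gamma (a + b) / (Real.Gamma a * Real.Gamma b)) *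
    ∫ u in (0:ℝ)..x, u ^ (a - 1) * (1 - u) ^ (b - 1)


lemma betaReal_integrable {a b : ℝ} (ha : 0 < a) (hb : 0 < b) :
    IntervalIntegrable (fun v : ℝ => v ^ (a - 1) * (1 - v) ^ (b - 1)) volume 0 1 := by
  have hc := Complex.betaIntegral_convergent (u := (a : ℂ)) (v := (b : ℂ))
    (by simpa using ha) (by simpa using hb)
  rw [intervalIntegrable_iff_integrableOn_Ioc_of_le zero_le_one] at hc ⊢
  refine hc.re.congr ?_
  filter_upwards [ae_restrict_mem measurableSet_Ioc] with x hx
  have hx0 : (0:ℝ) ≤ x := hx.1.le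
  have hx1 : (0:ℝ) ≤ 1 - x := by linarith [hx.2]
  have h1 : ((a : ℂ) - 1) = ((a - 1 : ℝ) : ℂ) := by push_cast; ring
  have h2 : ((b : ℂ) - 1) = ((b - 1 : ℝ) : ℂ) := by push_cast; ring
  have h3 : (1 : ℂ) - (x : ℂ) = ((1 - x : ℝ) : ℂ) := by push_cast; ring
  simp only [h1, h2, h3, ← Complex.ofReal_cpow hx0, ← Complex.ofReal_cpow hx1,
    ← Complex.ofReal_mul]
  exact Complex.ofReal_re _

lemma betaReal_value {a b : ℝ} (ha : 0 < a) (hb : 0 < b) :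
    ∫ v in (0:ℝ)..1, v ^ (a - 1) * (1 - v) ^ (b - 1)
      = Real.Gamma a * Real.Gamma b / Real.Gamma (a + b) := by
  have key := Complex.Gamma_mul_Gamma_eq_betaIntegral (s := (a : ℂ)) (t := (b : ℂ))
    (by simpa using ha) (by simpa using hb)
  have hco : Complex.betaIntegral (a : ℂ) (b : ℂ)
      = ((∫ v in (0:ℝ)..1, v ^ (a - 1) * (1 - v) ^ (b - 1) : ℝ) : ℂ) := by
    rw [Complex.betaIntegral, ← intervalIntegral.integral_ofReal]
    refine intervalIntegral.integral_congr fun x hx => ?_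
    rw [Set.uIcc_of_le zero_le_one] at hx
    have hx0 : (0:ℝ) ≤ x := hx.1
    have hx1 : (0:ℝ) ≤ 1 - x := by linarith [hx.2]
    have h1 : ((a : ℂ) - 1) = ((a - 1 : ℝ) : ℂ) := by push_cast; ring
    have h2 : ((b : ℂ) - 1) = ((b - 1 : ℝ) : ℂ) := by push_cast; ring
    have h3 : (1 : ℂ) - (x : ℂ) = ((1 - x : ℝ) : ℂ) := by push_cast; ring
    simp only [h1, h2, h3, ← Complex.ofReal_cpow hx0, ← Complex.ofReal_cpow hx1,
      ← Complex.ofReal_mul]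
  rw [hco] at key
  have hab : ((a : ℂ) + (b : ℂ)) = ((a + b : ℝ) : ℂ) := by push_cast; ring
  rw [hab, Complex.Gamma_ofReal, Complex.Gamma_ofReal, Complex.Gamma_ofReal,
    ← Complex.ofReal_mul, ← Complex.ofReal_mul] at key
  have := Complex.ofReal_inj.mp key
  have hG : Real.Gamma (a + b) ≠ 0 := (Real.Gamma_pos_of_pos (by linarith)).ne'
  field_simp
  linarith [this]

section shift

variable {a b s t τ : ℝ}

lemma beta_shift_integrable (ha : 0 < a) (hb : 0 < b) (hst : s ≤ t) (htτ : t ≤ τ)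
    (hsτ : s < τ) :
    IntervalIntegrable (fun u : ℝ => (u - s) ^ (a - 1) * (τ - u) ^ (b - 1)) volume s t := by
  have hc : (0:ℝ) < τ - s := by linarith
  set x : ℝ := (t - s) / (τ - s) with hx
  have hx0 : 0 ≤ x := div_nonneg (by linarith) hc.le
  have hx1 : x ≤ 1 := by rw [hx, div_le_one hc]; linarith
  have h0 : IntervalIntegrable (fun v : ℝ => v ^ (a - 1) * (1 - v) ^ (b - 1)) volume 0 x :=
    (betaReal_integrable ha hb).mono_set
      (by rw [Set.uIcc_of_le hx0, Set.uIcc_of_le zero_le_one]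
          exact Set.Icc_subset_Icc le_rfl hx1)
  have h1 := h0.comp_mul_right (c := (τ - s)⁻¹)
  have h2 := h1.comp_add_right (-s)
  have e1 : (0:ℝ) / (τ - s)⁻¹ - -s = s := by rw [zero_div]; ring
  have e2 : x / (τ - s)⁻¹ - -s = t := by rw [hx]; field_simp; ring
  rw [e1, e2] at h2
  rw [intervalIntegrable_iff_integrableOn_Ioc_of_le hst] at h2 ⊢
  refine ((h2.const_mul ((τ - s) ^ (a + b - 2))).congr ?_)
  filter_upwards [ae_restrict_mem measurableSet_Ioc] with u hu
  have hu1 : 0 ≤ u - s := by linarith [hu.1]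
  have hu2 : 0 ≤ τ - u := by linarith [hu.2]
  have key : (1 : ℝ) - (u + -s) * (τ - s)⁻¹ = (τ - u) / (τ - s) := by field_simp; ring
  simp only [key]
  rw [show (u + -s) * (τ - s)⁻¹ = (u - s)/(τ - s) by ring,
    Real.div_rpow hu1 hc.le, Real.div_rpow hu2 hc.le]
  rw [show a + b - 2 = (a-1) + (b-1) by ring, Real.rpow_add hc]
  field_simp

lemma beta_shift (ha : 0 < a) (hb : 0 < b) (hst : s ≤ t) (htτ : t ≤ τ) (hsτ : s < τ) :
    ∫ u in s..t, (u - s) ^ (a - 1) * (τ - u) ^ (b - 1)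
      = (τ - s) ^ (a + b - 1)
          * ∫ v in (0:ℝ)..(t - s) / (τ - s), v ^ (a - 1) * (1 - v) ^ (b - 1) := by
  have hc : (0:ℝ) < τ - s := by linarith
  set x : ℝ := (t - s) / (τ - s) with hx
  have hstep : ∫ u in s..t, (u - s) ^ (a - 1) * (τ - u) ^ (b - 1)
      = (τ - s) ^ (a + b - 2) * ∫ u in s..t,
          ((u - s)/(τ - s)) ^ (a - 1) * (1 - (u - s)/(τ - s)) ^ (b - 1) := by
    rw [← intervalIntegral.integral_const_mul]
    refine intervalIntegral.integral_congr fun u hu => ?_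
    rw [Set.uIcc_of_le hst] at hu
    have hu1 : 0 ≤ u - s := by linarith [hu.1]
    have hu2 : 0 ≤ τ - u := by linarith [hu.2]
    have key : (1 : ℝ) - (u - s) / (τ - s) = (τ - u) / (τ - s) := by field_simp; ring
    rw [key, Real.div_rpow hu1 hc.le, Real.div_rpow hu2 hc.le,
      show a + b - 2 = (a-1) + (b-1) by ring, Real.rpow_add hc]
    field_simp
  have hsub : ∫ u in s..t, ((u - s)/(τ - s)) ^ (a - 1) * (1 - (u - s)/(τ - s)) ^ (b - 1)
      = (τ - s) * ∫ v in (0:ℝ)..x, v ^ (a - 1) * (1 - v) ^ (b - 1) := by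
    have h1 : (fun u : ℝ => ((u - s)/(τ - s)) ^ (a - 1) * (1 - (u - s)/(τ - s)) ^ (b - 1))
        = fun u : ℝ => (fun y : ℝ => (y/(τ - s)) ^ (a - 1) * (1 - y/(τ - s)) ^ (b - 1)) (u - s) := by
      funext u; rfl
    have h2 := intervalIntegral.integral_comp_sub_right (a := s) (b := t)
      (fun y : ℝ => (y / (τ - s)) ^ (a - 1) * (1 - y / (τ - s)) ^ (b - 1)) s
    have h3 := intervalIntegral.integral_comp_div (a := (0:ℝ)) (b := t - s) (c := τ - s)
      (fun v : ℝ => v ^ (a - 1) * (1 - v) ^ (b - 1)) hc.ne'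
    rw [h1, h2, sub_self, h3, zero_div, smul_eq_mul]
  rw [hstep, hsub, ← mul_assoc, ← Real.rpow_add_one hc.ne', show a + b - 2 + 1 = a + b -1 by ring]

lemma beta_conv (ha : 0 < a) (hb : 0 < b) (hsτ : s < τ) :
    ∫ u in s..τ, (u - s) ^ (a - 1) * (τ - u) ^ (b - 1)
      = (τ - s) ^ (a + b - 1) * (Real.Gamma a * Real.Gamma b / Real.Gamma (a + b)) := by
  have hc : (0:ℝ) < τ - s := by linarith
  rw [beta_shift ha hb hsτ.le le_rfl hsτ, div_self hc.ne', betaReal_value ha hb]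

end shift

lemma measurableSet_volSimplex (n : ℕ) (s t : ℝ) : MeasurableSet (volSimplex n s t) := by
  have : volSimplex n s t =
      (⋂ i, {r : Fin n → ℝ | r i ∈ Set.Icc s t}) ∩
        ⋂ i, ⋂ j, ⋂ (_ : i ≤ j), {r : Fin n → ℝ | r i ≤ r j} := by
    ext r
    simp only [volSimplex, Set.mem_setOf_eq, Set.mem_inter_iff, Set.mem_iInter]
  rw [this]
  exact (MeasurableSet.iInter fun i =>
      (measurable_pi_apply i) measurableSet_Icc).inter
    (MeasurableSet.iInter fun i => MeasurableSet.iInter fun j => MeasurableSet.iInter fun _ =>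
      measurableSet_le (measurable_pi_apply i) (measurable_pi_apply j))

lemma cons_mem_volSimplex_iff {n : ℕ} {s t u : ℝ} {r : Fin (n + 1) → ℝ} :
    Fin.cons u r ∈ volSimplex (n + 2) s t
      ↔ r ∈ volSimplex (n + 1) s t ∧ u ∈ Set.Icc s (r 0) := by
  constructor
  · rintro ⟨hIcc, hmono⟩
    refine ⟨⟨fun i => hIcc i.succ, fun i j hij => hmono i.succ j.succ (by simpa using hij)⟩,
      (hIcc 0).1, ?_⟩
    have := hmono 0 1 (by simp)
    simpa using this
  · rintro ⟨⟨hIcc, hmono⟩, hu1, hu2⟩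
    constructor
    · intro i
      refine Fin.cases ?_ (fun i => hIcc i) i
      exact ⟨hu1, le_trans hu2 (hIcc 0).2⟩
    · intro i j hij
      rcases Fin.eq_zero_or_eq_succ i with hi | ⟨i', rfl⟩
      · subst hi
        rcases Fin.eq_zero_or_eq_succ j with hj | ⟨j', rfl⟩
        · subst hj; exact le_rfl
        · simpa using le_trans hu2 (hmono 0 j' (Fin.zero_le _))
      · rcases Fin.eq_zero_or_eq_succ j with hj | ⟨j', rfl⟩
        · subst hj
          have h0 : (i'.succ : ℕ) ≤ 0 := hij
          simp [Fin.val_succ] at h0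
        · simpa using hmono i' j' (Fin.succ_le_succ_iff.mp hij)

lemma funconst_mem_volSimplex_iff {s t u : ℝ} :
    (fun _ : Fin 1 => u) ∈ volSimplex 1 s t ↔ u ∈ Set.Icc s t := by
  constructor
  · rintro ⟨hIcc, -⟩; exact hIcc 0
  · intro hu; exact ⟨fun _ => hu, fun i j _ => le_rfl⟩

/-- Base case: lintegral over the 1-simplex. -/
lemma lintegral_volSimplex_one (s t : ℝ) (f : (Fin 1 → ℝ) → ENNReal) (hf : Measurable f) :
    ∫⁻ r in volSimplex 1 s t, f r = ∫⁻ u in Set.Icc s t, f (fun _ => u) := by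
  have hmp := (volume_preserving_funUnique (Fin 1) ℝ).symm (MeasurableEquiv.funUnique (Fin 1) ℝ)
  have hg : Measurable fun u : ℝ => ((volSimplex 1 s t).indicator f) (fun _ => u) := by
    have hm : Measurable fun u : ℝ => (fun _ : Fin 1 => u) :=
      measurable_pi_iff.mpr fun _ => measurable_id
    exact ((hf.indicator (measurableSet_volSimplex 1 s t)).comp hm)
  rw [← lintegral_indicator (measurableSet_volSimplex 1 s t)]
  have hcomp := hmp.lintegral_comp (f := (volSimplex 1 s t).indicator f)
    ((hf.indicator (measurableSet_volSimplex 1 s t)))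
  refine Eq.trans hcomp.symm ?_
  have he : ∀ u : ℝ, (MeasurableEquiv.funUnique (Fin 1) ℝ).symm u = fun _ : Fin 1 => u := by
    intro u; funext i; simp [MeasurableEquiv.funUnique]
  calc ∫⁻ u : ℝ, ((volSimplex 1 s t).indicator f) ((MeasurableEquiv.funUnique (Fin 1) ℝ).symm u)
      = ∫⁻ u : ℝ, (Set.Icc s t).indicator (fun v => f (fun _ => v)) u := by
        refine lintegral_congr fun u => ?_
        rw [he u]
        by_cases hu : u ∈ Set.Icc s t
        · rw [Set.indicator_of_mem hu, Set.indicator_of_mem (funconst_mem_volSimplex_iff.mpr hu)]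
        · rw [Set.indicator_of_notMem hu,
            Set.indicator_of_notMem (fun h => hu (funconst_mem_volSimplex_iff.mp h))]
    _ = ∫⁻ u in Set.Icc s t, f (fun _ => u) := lintegral_indicator measurableSet_Icc _

/-- Peeling off the first coordinate of the simplex. -/
lemma lintegral_volSimplex_peel {n : ℕ} (s t : ℝ) (f : (Fin (n + 2) → ℝ) → ENNReal)
    (hf : Measurable f) :
    ∫⁻ r in volSimplex (n + 2) s t, f r
      = ∫⁻ r in volSimplex (n + 1) s t, ∫⁻ u in Set.Icc s (r 0), f (Fin.cons u r) := by
  have hS := measurableSet_volSimplex (n + 2) s t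
  have hS' := measurableSet_volSimplex (n + 1) s t
  set e := MeasurableEquiv.piFinSuccAbove (fun _ : Fin (n + 2) => ℝ) 0 with he
  have hmp := (volume_preserving_piFinSuccAbove (fun _ : Fin (n + 2) => ℝ) 0).symm e
  have hind : Measurable ((volSimplex (n + 2) s t).indicator f) := hf.indicator hS
  rw [← lintegral_indicator hS, ← hmp.lintegral_comp hind]
  have hsymm : ∀ (p : ℝ × (Fin (n + 1) → ℝ)), e.symm p = Fin.cons p.1 p.2 := by
    intro p
    simp [he, MeasurableEquiv.piFinSuccAbove, Fin.insertNthEquiv, Fin.insertNth_zero]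
  have hmeas2 : Measurable fun p : ℝ × (Fin (n + 1) → ℝ) =>
      ((volSimplex (n + 2) s t).indicator f) (Fin.cons p.1 p.2) := by
    have : Measurable fun p : ℝ × (Fin (n + 1) → ℝ) => (Fin.cons p.1 p.2 : Fin (n+2) → ℝ) := by
      refine measurable_pi_iff.mpr fun i => ?_
      refine Fin.cases ?_ (fun i' => ?_) i
      · simpa using measurable_fst
      · simp only [Fin.cons_succ]
        exact (measurable_pi_apply i').comp measurable_snd
    exact hind.comp this
  calc ∫⁻ p : ℝ × (Fin (n + 1) → ℝ), ((volSimplex (n + 2) s t).indicator f) (e.symm p)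
      = ∫⁻ p : ℝ × (Fin (n + 1) → ℝ),
          ((volSimplex (n + 2) s t).indicator f) (Fin.cons p.1 p.2) := by
        exact lintegral_congr fun p => by rw [hsymm p]
    _ = ∫⁻ r : Fin (n + 1) → ℝ, ∫⁻ u : ℝ,
          ((volSimplex (n + 2) s t).indicator f) (Fin.cons u r) := by
        exact lintegral_prod_symm _ hmeas2.aemeasurable
    _ = ∫⁻ r : Fin (n + 1) → ℝ, (volSimplex (n + 1) s t).indicator
          (fun r' => ∫⁻ u in Set.Icc s (r' 0), f (Fin.cons u r')) r := by
        refine lintegral_congr fun r => ?_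
        by_cases hr : r ∈ volSimplex (n + 1) s t
        · rw [Set.indicator_of_mem hr, ← lintegral_indicator measurableSet_Icc]
          refine lintegral_congr fun u => ?_
          by_cases hu : u ∈ Set.Icc s (r 0)
          · rw [Set.indicator_of_mem (cons_mem_volSimplex_iff.mpr ⟨hr, hu⟩),
              Set.indicator_of_mem hu]
          · rw [Set.indicator_of_notMem
              (fun h => hu (cons_mem_volSimplex_iff.mp h).2),
              Set.indicator_of_notMem hu]
        · rw [Set.indicator_of_notMem hr]
          have : ∀ u : ℝ, ((volSimplex (n + 2) s t).indicator f) (Fin.cons u r) = 0 := by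
            intro u
            exact Set.indicator_of_notMem
              (fun h => hr (cons_mem_volSimplex_iff.mp h).1) _
          simp [this]
    _ = ∫⁻ r in volSimplex (n + 1) s t, ∫⁻ u in Set.Icc s (r 0), f (Fin.cons u r) :=
        lintegral_indicator hS' _

lemma measurable_nxt_comp {n : ℕ} (τ : ℝ) (l : Fin n) :
    Measurable fun r : Fin n → ℝ => nxt r τ l := by
  unfold nxt
  split
  · exact measurable_pi_apply _
  · exact measurable_const

lemma nxt_sub_nonneg {n : ℕ} {s t τ : ℝ} {r : Fin n → ℝ} (hr : r ∈ volSimplex n s t)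
    (htτ : t ≤ τ) (l : Fin n) : 0 ≤ nxt r τ l - r l := by
  obtain ⟨hIcc, hmono⟩ := hr
  unfold nxt
  split
  · next h => exact sub_nonneg.mpr (hmono l ⟨(l : ℕ) + 1, h⟩ (by simp [Fin.le_def]))
  · exact sub_nonneg.mpr (le_trans (hIcc l).2 htτ)

/-- The inner Beta convolution step, in `ℝ≥0∞` form. -/
lemma inner_beta {a b C s w : ℝ} (ha : 0 < a) (hb : 0 < b) (hsw : s < w) (hC : 0 ≤ C) :
    ∫⁻ u in Set.Icc s w,
        ENNReal.ofReal ((u - s) ^ (a - 1) / Real.Gamma a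
          * ((w - u) ^ (b - 1) / Real.Gamma b * C))
      = ENNReal.ofReal ((w - s) ^ (a + b - 1) / Real.Gamma (a + b) * C) := by
  have hGa := Real.Gamma_pos_of_pos ha
  have hGb := Real.Gamma_pos_of_pos hb
  have hGab := Real.Gamma_pos_of_pos (by linarith : 0 < a + b)
  set k : ℝ := C / (Real.Gamma a * Real.Gamma b) with hk
  have hstep : ∫⁻ u in Set.Icc s w,
      ENNReal.ofReal ((u - s) ^ (a - 1) / Real.Gamma a
        * ((w - u) ^ (b - 1) / Real.Gamma b * C))
      = ∫⁻ u in Set.Icc s w,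
          ENNReal.ofReal ((u - s) ^ (a - 1) * (w - u) ^ (b - 1) * k) := by
    refine lintegral_congr fun u => ?_
    congr 1
    rw [hk]; field_simp
  rw [hstep]
  have hInt : IntegrableOn (fun u : ℝ => (u - s) ^ (a - 1) * (w - u) ^ (b - 1) * k)
      (Set.Icc s w) volume := by
    rw [integrableOn_Icc_iff_integrableOn_Ioc]
    exact (((intervalIntegrable_iff_integrableOn_Ioc_of_le hsw.le).mp
      (beta_shift_integrable ha hb hsw.le le_rfl hsw)).mul_const k)
  have hnn : 0 ≤ᵐ[volume.restrict (Set.Icc s w)]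
      fun u : ℝ => (u - s) ^ (a - 1) * (w - u) ^ (b - 1) * k := by
    filter_upwards [ae_restrict_mem measurableSet_Icc] with u hu
    have h1 : (0:ℝ) ≤ u - s := by linarith [hu.1]
    have h2 : (0:ℝ) ≤ w - u := by linarith [hu.2]
    have hk0 : 0 ≤ k := by positivity
    positivity
  rw [← ofReal_integral_eq_lintegral_ofReal hInt hnn]
  congr 1
  rw [MeasureTheory.integral_Icc_eq_integral_Ioc,
    ← intervalIntegral.integral_of_le hsw.le, intervalIntegral.integral_mul_const,
    beta_conv ha hb hsw, hk]
  field_simp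

lemma nxt_cons_zero {n : ℕ} (u : ℝ) (r : Fin (n + 1) → ℝ) (τ : ℝ) :
    nxt (Fin.cons u r) τ 0 = r 0 := by
  unfold nxt
  rw [dif_pos (by simp)]
  have he : (⟨((0 : Fin (n + 2)) : ℕ) + 1, by simp⟩ : Fin (n + 2)) = Fin.succ 0 := by
    simp [Fin.ext_iff]
  rw [he, Fin.cons_succ]

lemma nxt_cons_succ {n : ℕ} (u : ℝ) (r : Fin (n + 1) → ℝ) (τ : ℝ) (l : Fin (n + 1)) :
    nxt (Fin.cons u r) τ l.succ = nxt r τ l := by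
  unfold nxt
  by_cases h : (l : ℕ) + 1 < n + 1
  · rw [dif_pos (by simp [Fin.val_succ]; omega), dif_pos h]
    have he : (⟨((l.succ : Fin (n+2)) : ℕ) + 1, by simp [Fin.val_succ]; omega⟩ : Fin (n + 2))
        = Fin.succ ⟨(l : ℕ) + 1, h⟩ := by
      simp [Fin.ext_iff, Fin.val_succ]
    rw [he, Fin.cons_succ]
  · rw [dif_neg (by simp [Fin.val_succ]; omega), dif_neg h]

lemma measurable_hpow (c : ℝ) : Measurable fun x : ℝ => x ^ c := by measurability

/-- Main induction: the closed form for the weighted simplex integral. -/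
lemma keyB (n : ℕ) : ∀ (b : Fin (n + 1) → ℝ), (∀ l, 0 < b l) → ∀ a s t τ : ℝ,
    0 < a → s < t → t ≤ τ →
    ∫⁻ r in volSimplex (n + 1) s t,
        ENNReal.ofReal ((r 0 - s) ^ (a - 1) / Real.Gamma a
          * ∏ l, ((nxt r τ l - r l) ^ (b l - 1) / Real.Gamma (b l)))
      = ENNReal.ofReal ((τ - s) ^ (a + (∑ l, b l) - 1)
          / (Real.Gamma (a + ∑ l : Fin n, b l.castSucc) * Real.Gamma (b (Fin.last n)))
          * ∫ v in (0:ℝ)..(t - s) / (τ - s),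
              v ^ (a + (∑ l : Fin n, b l.castSucc) - 1) * (1 - v) ^ (b (Fin.last n) - 1)) := by
  induction n with
  | zero =>
    intro b hb a s t τ ha hst htτ
    have hsτ : s < τ := lt_of_lt_of_le hst htτ
    have hGa := Real.Gamma_pos_of_pos ha
    have hGb := Real.Gamma_pos_of_pos (hb 0)
    have hmf : Measurable fun r : Fin 1 → ℝ =>
        ENNReal.ofReal ((r 0 - s) ^ (a - 1) / Real.Gamma a
          * ∏ l, ((nxt r τ l - r l) ^ (b l - 1) / Real.Gamma (b l))) := by
      apply Measurable.ennreal_ofReal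
      apply Measurable.mul
      · exact ((measurable_hpow (a-1)).comp
          ((measurable_pi_apply 0).sub measurable_const)).div_const _
      · refine Finset.measurable_prod _ fun l _ => ?_
        exact ((measurable_hpow _).comp
          ((measurable_nxt_comp τ l).sub (measurable_pi_apply l))).div_const _
    rw [lintegral_volSimplex_one s t _ hmf]
    set k : ℝ := (Real.Gamma a * Real.Gamma (b 0))⁻¹ with hk
    have hInt : IntegrableOn (fun u : ℝ => (u - s) ^ (a - 1) * (τ - u) ^ (b 0 - 1) * k)
        (Set.Icc s t) volume := by
      rw [integrableOn_Icc_iff_integrableOn_Ioc]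
      exact ((intervalIntegrable_iff_integrableOn_Ioc_of_le hst.le).mp
        (beta_shift_integrable ha (hb 0) hst.le htτ hsτ)).mul_const k
    have hnn : 0 ≤ᵐ[volume.restrict (Set.Icc s t)]
        fun u : ℝ => (u - s) ^ (a - 1) * (τ - u) ^ (b 0 - 1) * k := by
      filter_upwards [ae_restrict_mem measurableSet_Icc] with u hu
      have h1 : (0:ℝ) ≤ u - s := by linarith [hu.1]
      have h2 : (0:ℝ) ≤ τ - u := by linarith [hu.2, htτ]
      have hk0 : (0:ℝ) ≤ k := by positivity
      positivity
    calc ∫⁻ u in Set.Icc s t, ENNReal.ofReal (((fun _ : Fin 1 => u) 0 - s) ^ (a - 1)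
            / Real.Gamma a * ∏ l, ((nxt (fun _ : Fin 1 => u) τ l - (fun _ : Fin 1 => u) l)
              ^ (b l - 1) / Real.Gamma (b l)))
        = ∫⁻ u in Set.Icc s t,
            ENNReal.ofReal ((u - s) ^ (a - 1) * (τ - u) ^ (b 0 - 1) * k) := by
          refine lintegral_congr fun u => ?_
          congr 1
          rw [Fin.prod_univ_one]
          show (u - s) ^ (a - 1) / Real.Gamma a
              * ((nxt (fun _ : Fin 1 => u) τ 0 - u) ^ (b 0 - 1) / Real.Gamma (b 0)) = _
          have : nxt (fun _ : Fin 1 => u) τ 0 = τ := by unfold nxt; simp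
          rw [this, hk]
          field_simp
      _ = ENNReal.ofReal (∫ u in Set.Icc s t,
            (u - s) ^ (a - 1) * (τ - u) ^ (b 0 - 1) * k) :=
          (ofReal_integral_eq_lintegral_ofReal hInt hnn).symm
      _ = ENNReal.ofReal ((τ - s) ^ (a + (∑ l, b l) - 1)
            / (Real.Gamma (a + ∑ l : Fin 0, b l.castSucc) * Real.Gamma (b (Fin.last 0)))
            * ∫ v in (0:ℝ)..(t - s) / (τ - s),
                v ^ (a + (∑ l : Fin 0, b l.castSucc) - 1) * (1 - v) ^ (b (Fin.last 0) - 1)) := by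
          congr 1
          rw [MeasureTheory.integral_Icc_eq_integral_Ioc,
            ← intervalIntegral.integral_of_le hst.le, intervalIntegral.integral_mul_const,
            beta_shift ha (hb 0) hst.le htτ hsτ]
          simp only [Finset.univ_eq_empty, Finset.sum_empty, add_zero]
          have hsum : (∑ l, b l) = b 0 := Fin.sum_univ_one b
          rw [hsum, hk]
          have : b (Fin.last 0) = b 0 := rfl
          rw [this]
          field_simp
  | succ n IH =>
    intro b hb a s t τ ha hst htτ
    have hsτ : s < τ := lt_of_lt_of_le hst htτ
    have hS' := measurableSet_volSimplex (n + 1) s t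
    have hf : Measurable fun r : Fin (n + 2) → ℝ =>
        ENNReal.ofReal ((r 0 - s) ^ (a - 1) / Real.Gamma a
          * ∏ l, ((nxt r τ l - r l) ^ (b l - 1) / Real.Gamma (b l))) := by
      apply Measurable.ennreal_ofReal
      apply Measurable.mul
      · exact ((measurable_hpow (a-1)).comp
          ((measurable_pi_apply 0).sub measurable_const)).div_const _
      · refine Finset.measurable_prod _ fun l _ => ?_
        exact ((measurable_hpow _).comp
          ((measurable_nxt_comp τ l).sub (measurable_pi_apply l))).div_const _
    rw [lintegral_volSimplex_peel s t _ hf]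
    have h0 : ∀ᵐ r : Fin (n + 1) → ℝ ∂(volume.restrict (volSimplex (n + 1) s t)), r 0 ≠ s := by
      refine ae_restrict_of_ae ?_
      have := MeasureTheory.Measure.ae_eval_ne (fun _ : Fin (n + 1) => (volume : Measure ℝ)) 0 s
      rwa [← volume_pi] at this
    have hstep : ∫⁻ r in volSimplex (n + 1) s t, ∫⁻ u in Set.Icc s (r 0),
          ENNReal.ofReal (((Fin.cons u r : Fin (n+2) → ℝ) 0 - s) ^ (a - 1) / Real.Gamma a
            * ∏ l, ((nxt (Fin.cons u r) τ l - (Fin.cons u r : Fin (n+2) → ℝ) l) ^ (b l - 1)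
                / Real.Gamma (b l)))
        = ∫⁻ r in volSimplex (n + 1) s t,
            ENNReal.ofReal ((r 0 - s) ^ (a + b 0 - 1) / Real.Gamma (a + b 0)
              * ∏ l : Fin (n + 1),
                  ((nxt r τ l - r l) ^ (b l.succ - 1) / Real.Gamma (b l.succ))) := by
      refine lintegral_congr_ae ?_
      filter_upwards [ae_restrict_mem hS', h0] with r hr hne
      have hs0 : s < r 0 := lt_of_le_of_ne (hr.1 0).1 (Ne.symm hne)
      set C : ℝ := ∏ l : Fin (n + 1),
          ((nxt r τ l - r l) ^ (b l.succ - 1) / Real.Gamma (b l.succ)) with hC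
      have hC0 : 0 ≤ C :=
        Finset.prod_nonneg fun l _ => div_nonneg
          (Real.rpow_nonneg (nxt_sub_nonneg hr htτ l) _)
          (Real.Gamma_pos_of_pos (hb l.succ)).le
      have hcons : ∀ u : ℝ,
          ((Fin.cons u r : Fin (n+2) → ℝ) 0 - s) ^ (a - 1) / Real.Gamma a
            * ∏ l, ((nxt (Fin.cons u r) τ l - (Fin.cons u r : Fin (n+2) → ℝ) l) ^ (b l - 1)
                / Real.Gamma (b l))
          = (u - s) ^ (a - 1) / Real.Gamma a
              * ((r 0 - u) ^ (b 0 - 1) / Real.Gamma (b 0) * C) := by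
        intro u
        rw [Fin.prod_univ_succ, Fin.cons_zero, nxt_cons_zero, hC]
        congr 2
        refine Finset.prod_congr rfl fun l _ => ?_
        rw [nxt_cons_succ, Fin.cons_succ]
      calc ∫⁻ u in Set.Icc s (r 0),
            ENNReal.ofReal (((Fin.cons u r : Fin (n+2) → ℝ) 0 - s) ^ (a - 1) / Real.Gamma a
              * ∏ l, ((nxt (Fin.cons u r) τ l - (Fin.cons u r : Fin (n+2) → ℝ) l) ^ (b l - 1)
                  / Real.Gamma (b l)))
          = ∫⁻ u in Set.Icc s (r 0), ENNReal.ofReal ((u - s) ^ (a - 1) / Real.Gamma a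
              * ((r 0 - u) ^ (b 0 - 1) / Real.Gamma (b 0) * C)) :=
            lintegral_congr fun u => by rw [hcons u]
        _ = ENNReal.ofReal ((r 0 - s) ^ (a + b 0 - 1) / Real.Gamma (a + b 0) * C) :=
            inner_beta ha (hb 0) hs0 hC0
    rw [hstep]
    have hIH := IH (fun l => b l.succ) (fun l => hb l.succ) (a + b 0) s t τ
      (by have := hb 0; linarith) hst htτ
    rw [hIH]
    congr 1
    have hE1 : a + b 0 + (∑ l : Fin (n + 1), b l.succ) = a + ∑ l : Fin (n + 2), b l := by
      rw [Fin.sum_univ_succ (f := b)]; ring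
    have hE2 : a + b 0 + (∑ l : Fin n, b l.castSucc.succ)
        = a + ∑ l : Fin (n + 1), b l.castSucc := by
      rw [Fin.sum_univ_succ (f := fun l : Fin (n + 1) => b l.castSucc)]
      simp only [Fin.castSucc_zero, Fin.succ_castSucc]
      ring
    have hE3 : b (Fin.last n).succ = b (Fin.last (n + 1)) := by rw [Fin.succ_last]
    rw [hE1, hE2]
    simp only [Fin.succ_last]

/-- Bochner-integral version of `keyB`. -/
lemma keyB' {n : ℕ} (b : Fin (n + 1) → ℝ) (hb : ∀ l, 0 < b l) (a s t τ : ℝ)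
    (ha : 0 < a) (hst : s < t) (htτ : t ≤ τ) :
    ∫ r in volSimplex (n + 1) s t,
        ((r 0 - s) ^ (a - 1) / Real.Gamma a
          * ∏ l, ((nxt r τ l - r l) ^ (b l - 1) / Real.Gamma (b l)))
      = (τ - s) ^ (a + (∑ l, b l) - 1)
          / (Real.Gamma (a + ∑ l : Fin n, b l.castSucc) * Real.Gamma (b (Fin.last n)))
          * ∫ v in (0:ℝ)..(t - s) / (τ - s),
              v ^ (a + (∑ l : Fin n, b l.castSucc) - 1) * (1 - v) ^ (b (Fin.last n) - 1) := by
  have hsτ : s < τ := lt_of_lt_of_le hst htτ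
  have hS := measurableSet_volSimplex (n + 1) s t
  have hmeas : Measurable fun r : Fin (n + 1) → ℝ =>
      (r 0 - s) ^ (a - 1) / Real.Gamma a
        * ∏ l, ((nxt r τ l - r l) ^ (b l - 1) / Real.Gamma (b l)) := by
    apply Measurable.mul
    · exact ((measurable_hpow (a - 1)).comp
        ((measurable_pi_apply 0).sub measurable_const)).div_const _
    · refine Finset.measurable_prod _ fun l _ => ?_
      exact ((measurable_hpow _).comp
        ((measurable_nxt_comp τ l).sub (measurable_pi_apply l))).div_const _
  have hnn : 0 ≤ᵐ[volume.restrict (volSimplex (n + 1) s t)]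
      fun r : Fin (n + 1) → ℝ => (r 0 - s) ^ (a - 1) / Real.Gamma a
        * ∏ l, ((nxt r τ l - r l) ^ (b l - 1) / Real.Gamma (b l)) := by
    filter_upwards [ae_restrict_mem hS] with r hr
    have h1 : (0:ℝ) ≤ r 0 - s := sub_nonneg.mpr (hr.1 0).1
    refine mul_nonneg (div_nonneg (Real.rpow_nonneg h1 _) (Real.Gamma_pos_of_pos ha).le) ?_
    exact Finset.prod_nonneg fun l _ => div_nonneg
      (Real.rpow_nonneg (nxt_sub_nonneg hr htτ l) _) (Real.Gamma_pos_of_pos (hb l)).le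
  have hsum0 : (0:ℝ) ≤ ∑ l : Fin n, b l.castSucc :=
    Finset.sum_nonneg fun l _ => (hb l.castSucc).le
  have hGd : (0:ℝ) < Real.Gamma (a + ∑ l : Fin n, b l.castSucc) :=
    Real.Gamma_pos_of_pos (by linarith)
  have hGl : (0:ℝ) < Real.Gamma (b (Fin.last n)) := Real.Gamma_pos_of_pos (hb _)
  have hx0 : 0 ≤ (t - s) / (τ - s) := div_nonneg (by linarith) (by linarith)
  have hx1 : (t - s) / (τ - s) ≤ 1 := by
    rw [div_le_one (by linarith)]; linarith
  have hJ : 0 ≤ ∫ v in (0:ℝ)..(t - s) / (τ - s),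
      v ^ (a + (∑ l : Fin n, b l.castSucc) - 1) * (1 - v) ^ (b (Fin.last n) - 1) := by
    refine intervalIntegral.integral_nonneg hx0 fun u hu => ?_
    exact mul_nonneg (Real.rpow_nonneg hu.1 _)
      (Real.rpow_nonneg (by linarith [hu.2, hx1]) _)
  rw [integral_eq_lintegral_of_nonneg_ae hnn hmeas.aestronglyMeasurable,
    keyB n b hb a s t τ ha hst htτ, ENNReal.toReal_ofReal]
  exact mul_nonneg (div_nonneg (Real.rpow_nonneg (by linarith) _)
    (mul_nonneg hGd.le hGl.le)) hJ

section chainLemmas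

variable {n : ℕ} {s τ : ℝ} {r : Fin (n + 1) → ℝ}

lemma chain_zero_succ : chain s τ r (0 : Fin (n + 2)).succ = r 0 := by
  unfold chain
  have h1 : ¬(((0 : Fin (n + 2)).succ : ℕ) = 0) := by simp
  have h2 : (((0 : Fin (n + 2)).succ : ℕ)) ≤ n + 1 := by simp
  rw [dif_neg h1, dif_pos h2]
  congr 1 <;> simp [Fin.ext_iff, Fin.val_succ]

lemma chain_zero_castSucc : chain s τ r (0 : Fin (n + 2)).castSucc = s := by
  unfold chain
  rw [dif_pos (by simp)]

lemma chain_succ_succ (l : Fin (n + 1)) : chain s τ r l.succ.succ = nxt r τ l := by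
  have h1 : ¬((l.succ.succ : ℕ) = 0) := by simp [Fin.val_succ]
  by_cases h : (l : ℕ) + 1 < n + 1
  · have h2 : ((l.succ.succ : ℕ)) ≤ n + 1 := by simp only [Fin.val_succ]; omega
    unfold chain nxt
    rw [dif_neg h1, dif_pos h2, dif_pos h]
    congr 1 <;> simp [Fin.ext_iff, Fin.val_succ]
  · have h2 : ¬((l.succ.succ : ℕ) ≤ n + 1) := by simp only [Fin.val_succ]; omega
    unfold chain nxt
    rw [dif_neg h1, dif_neg h2, dif_neg h]

lemma chain_succ_castSucc (l : Fin (n + 1)) : chain s τ r l.succ.castSucc = r l := by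
  have h1 : ¬((l.succ.castSucc : ℕ) = 0) := by simp [Fin.val_succ]
  have h2 : ((l.succ.castSucc : ℕ)) ≤ n + 1 := by
    simp only [Fin.coe_castSucc, Fin.val_succ]; omega
  unfold chain
  rw [dif_neg h1, dif_pos h2]
  congr 1 <;> simp [Fin.ext_iff, Fin.val_succ, Fin.coe_castSucc]

end chainLemmas


/-- Multivariate fractional kernels `k_r(t,s) = (t-s)^{β_r-1}/Γ(β_r)`:
closed forms for the weights `𝒦` (words of length `n + 1`) and `𝒦̇` (words of
length `n + 2`, i.e. the case `n ≥ 2` of the superscript) in terms of the regularized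
incomplete Beta function. -/
theorem stmt6 {T : ℝ} (hT : 0 < T) {q : ℕ} (hq : 1 ≤ q)
    (β : Fin q → ℝ) (hβ : ∀ r, 0 < β r) :
    (∀ (n : ℕ) (p : Fin (n + 1) → Fin q) (s t τ : ℝ),
      0 ≤ s → s < t → t ≤ τ → τ ≤ T →
      scrK (fun r a c => (a - c) ^ (β r - 1) / Real.Gamma (β r)) p s t τ
        = (τ - s) ^ (∑ l, β (p l)) / Real.Gamma ((∑ l, β (p l)) + 1)
            * regIncBeta ((t - s) / (τ - s))
              ((∑ l : Fin n, β (p l.castSucc)) + 1) (β (p (Fin.last n)))) ∧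
    (∀ (n : ℕ) (p : Fin (n + 2) → Fin q) (s t τ : ℝ),
      0 ≤ s → s < t → t ≤ τ → τ ≤ T →
      scrKdot (fun r a c => (a - c) ^ (β r - 1) / Real.Gamma (β r)) p s t τ
        = (τ - s) ^ ((∑ l, β (p l)) - 1) / Real.Gamma (∑ l, β (p l))
            * regIncBeta ((t - s) / (τ - s))
              (∑ l : Fin (n + 1), β (p l.castSucc)) (β (p (Fin.last (n + 1))))) := by
  
  constructor
  · -- part (a)
    intro n p s t τ hs hst htτ hτT
    set B : ℝ := ∑ l, β (p l) with hB
    set B' : ℝ := ∑ l : Fin n, β (p l.castSucc) with hB'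
    have hBB : B' + β (p (Fin.last n)) = B := by
      rw [hB, hB', Fin.sum_univ_castSucc (f := fun l => β (p l))]
    have hB'0 : 0 ≤ B' := Finset.sum_nonneg fun l _ => (hβ _).le
    have hkey := keyB' (fun l => β (p l)) (fun l => hβ (p l)) 1 s t τ one_pos hst htτ
    have hKint : scrK (fun r a c => (a - c) ^ (β r - 1) / Real.Gamma (β r)) p s t τ
        = ∫ r in volSimplex (n + 1) s t,
            ((r 0 - s) ^ ((1:ℝ) - 1) / Real.Gamma 1
              * ∏ l, ((nxt r τ l - r l) ^ (β (p l) - 1) / Real.Gamma (β (p l)))) := by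
      rw [scrK]
      refine integral_congr_ae (Filter.Eventually.of_forall fun r => ?_)
      simp only [sub_self, Real.rpow_zero, Real.Gamma_one, div_one, one_mul]
    rw [hKint, hkey, regIncBeta]
    beta_reduce
    have he1 : (1:ℝ) + (∑ l, β (p l)) - 1 = B := by rw [hB]; ring
    have he2 : (1:ℝ) + (∑ l : Fin n, β (p l.castSucc)) - 1 = B' := by rw [hB']; ring
    have he3 : B' + 1 + β (p (Fin.last n)) = B + 1 := by rw [← hBB]; ring
    have he4 : B' + 1 - 1 = B' := by ring
    rw [he1, he2, he3, he4]
    have hG1 := Real.Gamma_pos_of_pos (show (0:ℝ) < B + 1 by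
      have : 0 < B := by rw [← hBB]; have := hβ (p (Fin.last n)); linarith
      linarith)
    have hG2 := Real.Gamma_pos_of_pos (show (0:ℝ) < 1 + B' by linarith)
    have hG3 := Real.Gamma_pos_of_pos (hβ (p (Fin.last n)))
    have hre : (1:ℝ) + B' = B' + 1 := by ring
    rw [hre]
    field_simp
  · -- part (b)
    intro n p s t τ hs hst htτ hτT
    set B : ℝ := ∑ l, β (p l) with hB
    set B' : ℝ := ∑ l : Fin (n + 1), β (p l.castSucc) with hB'
    have hBB : B' + β (p (Fin.last (n + 1))) = B := by
      rw [hB, hB', Fin.sum_univ_castSucc (f := fun l => β (p l))]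
    have hB'0 : 0 < B' := by
      rw [hB']
      exact Finset.sum_pos (fun l _ => hβ _) Finset.univ_nonempty
    have hkey := keyB' (fun l : Fin (n + 1) => β (p l.succ)) (fun l => hβ (p l.succ))
      (β (p 0)) s t τ (hβ (p 0)) hst htτ
    have hKint : scrKdot (fun r a c => (a - c) ^ (β r - 1) / Real.Gamma (β r)) p s t τ
        = ∫ r in volSimplex (n + 1) s t,
            ((r 0 - s) ^ (β (p 0) - 1) / Real.Gamma (β (p 0))
              * ∏ l : Fin (n + 1),
                  ((nxt r τ l - r l) ^ (β (p l.succ) - 1) / Real.Gamma (β (p l.succ)))) := by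
      rw [scrKdot]
      refine integral_congr_ae (Filter.Eventually.of_forall fun r => ?_)
      show (∏ l : Fin (n + 2), (chain s τ r l.succ - chain s τ r l.castSucc) ^ (β (p l) - 1)
          / Real.Gamma (β (p l))) = _
      rw [Fin.prod_univ_succ]
      congr 1
      · refine Finset.prod_congr rfl fun l _ => ?_
        rw [chain_succ_succ, chain_succ_castSucc]
    rw [hKint, hkey, regIncBeta]
    beta_reduce
    have he1 : β (p 0) + (∑ l : Fin (n + 1), β (p l.succ)) - 1 = B - 1 := by
      rw [hB, Fin.sum_univ_succ (f := fun l => β (p l))]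
      try ring
    have he2 : β (p 0) + (∑ l : Fin n, β (p l.castSucc.succ)) = B' := by
      rw [hB', Fin.sum_univ_succ (f := fun l : Fin (n + 1) => β (p l.castSucc))]
      simp only [Fin.castSucc_zero, Fin.succ_castSucc]
      try ring
    have he3 : β (p (Fin.last n).succ) = β (p (Fin.last (n + 1))) := by rw [Fin.succ_last]
    rw [he2, he3, he1]
    have hG1 := Real.Gamma_pos_of_pos (show (0:ℝ) < B by
      rw [← hBB]; have := hβ (p (Fin.last (n + 1))); linarith)
    have hG2 := Real.Gamma_pos_of_pos hB'0
    have hG3 := Real.Gamma_pos_of_pos (hβ (p (Fin.last (n + 1))))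
    rw [hBB]
    field_simp
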